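/- arXiv:math/0401039 — 4 statements merged into one kernel-verified Lean document; each statement's English description precedes it below -/
import Mathlib

section
/- Let U ⊆ ℝⁿ be an open convex set and a : ℝⁿ → ℝⁿ a map that is continuously differentiable on U such that all commutator components K_{ij} = ∂a_j/∂x^i − ∂a_i/∂x^j vanish at every point of U (i.e. the 1-form θ = Σᵢ aᵢ dxⁱ is closed on U). Then θ is a differential: there exists f : ℝⁿ → ℝ that is differentiable on U with ∂f/∂x^i = a_i at every point of U. -/
/-!
A closed 1-form on an open convex set is exact: this is Mathlib's Poincaré lemma
`Convex.exists_forall_hasFDerivAt_of_fderiv_symmetric`, whose closedness hypothesis is the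
symmetry of the second derivative `dω x u v = dω x v u`. For `θ = Σ aᵢ dxⁱ` that bilinear form
has matrix `(∂a_j/∂x^i)`, so by bilinearity its symmetry reduces to `K_{ij} = 0`.
-/

section

variable {ι : Type*} [Fintype ι] [DecidableEq ι]

theorem ContinuousLinearMap.apply_comm_of_pi_single {𝕜 F : Type*} [NontriviallyNormedField 𝕜]
    [NormedAddCommGroup F] [NormedSpace 𝕜 F] (B : (ι → 𝕜) →L[𝕜] (ι → 𝕜) →L[𝕜] F)
    (h : ∀ i j, B (Pi.single i 1) (Pi.single j 1) = B (Pi.single j 1) (Pi.single i 1))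
    (u v : ι → 𝕜) : B u v = B v u := by
  rw [← (Pi.basisFun 𝕜 ι).sum_repr u, ← (Pi.basisFun 𝕜 ι).sum_repr v]
  simp only [map_sum, map_smul, FunLike.coe_sum, Finset.sum_apply, FunLike.coe_smul,
    Pi.smul_apply, Pi.basisFun_apply, Finset.smul_sum]
  rw [Finset.sum_comm]
  refine Finset.sum_congr rfl fun i _ => Finset.sum_congr rfl fun j _ => ?_
  rw [h, smul_comm]

/-- `w ↦ Σ wᵢ dxⁱ` -/
noncomputable def covectorOfCoeffs : (ι → ℝ) →L[ℝ] (ι → ℝ) →L[ℝ] ℝ :=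
  LinearMap.toContinuousLinearMap
    (LinearMap.toContinuousLinearMap.toLinearMap ∘ₗ (LinearEquiv.piRing ℝ ℝ ι ℝ).symm.toLinearMap)

@[simp]
theorem covectorOfCoeffs_apply_single (w : ι → ℝ) (j : ι) :
    covectorOfCoeffs w (Pi.single j 1) = w j := by
  simp [covectorOfCoeffs, Pi.single_apply]

end

/-- **Poincaré lemma for 1-forms on a convex open set.**
If `a : ℝⁿ → ℝⁿ` is continuously differentiable on an open convex set `U` and all the
commutator components `K_{ij} = ∂a_j/∂x^i − ∂a_i/∂x^j` vanish on `U` (the 1-form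
`θ = Σ aᵢ dxⁱ` is closed on `U`), then `θ` is a differential: there is `f` differentiable
on `U` with `∂f/∂x^i = aᵢ` on `U`. -/
theorem closed_one_form_is_differential_on_convex
    {n : ℕ} (U : Set (Fin n → ℝ)) (hU : IsOpen U) (hconv : Convex ℝ U)
    (a : (Fin n → ℝ) → (Fin n → ℝ)) (ha : ContDiffOn ℝ 1 a U)
    (hclosed : ∀ x ∈ U, ∀ i j : Fin n,
      fderiv ℝ (fun y => a y j) x (Pi.single i 1) =
      fderiv ℝ (fun y => a y i) x (Pi.single j 1)) :
    ∃ f : (Fin n → ℝ) → ℝ, DifferentiableOn ℝ f U ∧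
      ∀ x ∈ U, ∀ i : Fin n, fderiv ℝ f x (Pi.single i 1) = a x i := by
  have hda : ∀ x ∈ U, DifferentiableAt ℝ a x := fun x hx =>
    (ha.differentiableOn one_ne_zero x hx).differentiableAt (hU.mem_nhds hx)
  have hdω : ∀ x ∈ U, fderiv ℝ (covectorOfCoeffs ∘ a) x =
      covectorOfCoeffs.comp (fderiv ℝ a x) := fun x hx =>
    (covectorOfCoeffs.hasFDerivAt.comp x (hda x hx).hasFDerivAt).fderiv
  have hsymm : ∀ x ∈ U, ∀ u v, fderiv ℝ (covectorOfCoeffs ∘ a) x u v =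
      fderiv ℝ (covectorOfCoeffs ∘ a) x v u := by
    intro x hx u v
    rw [hdω x hx]
    refine ContinuousLinearMap.apply_comm_of_pi_single _ (fun i j => ?_) u v
    simpa [fderiv_apply (hda x hx)] using hclosed x hx i j
  obtain ⟨f, hf⟩ := hconv.exists_forall_hasFDerivAt_of_fderiv_symmetric hU
    (fun x hx => (covectorOfCoeffs.differentiableAt.comp x (hda x hx)).differentiableWithinAt)
    hsymm
  refine ⟨f, fun x hx => (hf x hx).differentiableAt.differentiableWithinAt, fun x hx i => ?_⟩
  rw [(hf x hx).fderiv]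
  exact covectorOfCoeffs_apply_single (a x) i
end

section
/- Let E and F be real normed vector spaces, and let ω : E → (E →L[ℝ] ℝ) be a C¹ differential 1-form that is closed, i.e. at every x ∈ E its Fréchet derivative is symmetric: (Dω(x) v)(w) = (Dω(x) w)(v) for all v, w ∈ E. Let φ : F → E be a C² map. Then the pullback 1-form φ*ω : F → (F →L[ℝ] ℝ), defined by (φ*ω)(y)(w) = ω(φ(y))(Dφ(y) w), is also closed: at every y ∈ F its Fréchet derivative is symmetric, (D(φ*ω)(y) v)(w) = (D(φ*ω)(y) w)(v) for all v, w ∈ F. -/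
/-! The chain and product rules give
`D(φ*ω)(y) v w = ω(φ y) (D²φ(y) v w) + Dω(φ y) (Dφ(y) v) (Dφ(y) w)`.
The second term is symmetric in `v, w` because `ω` is closed, the first by Schwarz's theorem
for the C² map `φ`. -/

section Pullback

variable {𝕜 : Type*} [NontriviallyNormedField 𝕜]
  {E F G : Type*} [NormedAddCommGroup E] [NormedSpace 𝕜 E]
  [NormedAddCommGroup F] [NormedSpace 𝕜 F] [NormedAddCommGroup G] [NormedSpace 𝕜 G]
  {ω : E → E →L[𝕜] G} {φ : F → E} {y : F}

theorem fderiv_pullback_apply (hω : DifferentiableAt 𝕜 ω (φ y)) (hφ : DifferentiableAt 𝕜 φ y)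
    (hdφ : DifferentiableAt 𝕜 (fderiv 𝕜 φ) y) (v w : F) :
    fderiv 𝕜 (fun z => (ω (φ z)).comp (fderiv 𝕜 φ z)) y v w =
      ω (φ y) (fderiv 𝕜 (fderiv 𝕜 φ) y v w) +
        fderiv 𝕜 ω (φ y) (fderiv 𝕜 φ y v) (fderiv 𝕜 φ y w) := by
  have hωφ : HasFDerivAt (fun z => ω (φ z)) ((fderiv 𝕜 ω (φ y)).comp (fderiv 𝕜 φ y)) y :=
    hω.hasFDerivAt.comp y hφ.hasFDerivAt
  rw [(hωφ.clm_comp hdφ.hasFDerivAt).fderiv]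
  simp only [add_apply, ContinuousLinearMap.coe_comp, Function.comp_apply,
    ContinuousLinearMap.compL_apply, ContinuousLinearMap.flip_apply]

theorem fderiv_pullback_symm (hω : DifferentiableAt 𝕜 ω (φ y))
    (hclosed : ∀ v w, fderiv 𝕜 ω (φ y) v w = fderiv 𝕜 ω (φ y) w v)
    (hφ : DifferentiableAt 𝕜 φ y) (hdφ : DifferentiableAt 𝕜 (fderiv 𝕜 φ) y)
    (hφ_symm : IsSymmSndFDerivAt 𝕜 φ y) (v w : F) :
    fderiv 𝕜 (fun z => (ω (φ z)).comp (fderiv 𝕜 φ z)) y v w =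
      fderiv 𝕜 (fun z => (ω (φ z)).comp (fderiv 𝕜 φ z)) y w v := by
  rw [fderiv_pullback_apply hω hφ hdφ, fderiv_pullback_apply hω hφ hdφ, hclosed, hφ_symm v w]

end Pullback

/-- **Invariance of closedness under pullback.**
If `ω : E → (E →L[ℝ] ℝ)` is a C¹ differential 1-form which is closed (its Fréchet
derivative is symmetric at every point) and `φ : F → E` is a C² map, then the pullback
1-form `φ*ω`, defined by `(φ*ω)(y)(w) = ω(φ(y))(Dφ(y) w)`, is also closed. -/
theorem pullback_of_closed_one_form_is_closed
    {E F : Type*} [NormedAddCommGroup E] [NormedSpace ℝ E]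
    [NormedAddCommGroup F] [NormedSpace ℝ F]
    (ω : E → (E →L[ℝ] ℝ)) (hω : ContDiff ℝ 1 ω)
    (hclosed : ∀ x : E, ∀ v w : E, fderiv ℝ ω x v w = fderiv ℝ ω x w v)
    (φ : F → E) (hφ : ContDiff ℝ 2 φ) :
    ∀ y : F, ∀ v w : F,
      fderiv ℝ (fun z => (ω (φ z)).comp (fderiv ℝ φ z)) y v w =
      fderiv ℝ (fun z => (ω (φ z)).comp (fderiv ℝ φ z)) y w v := by
  intro y
  have hdφ : ContDiff ℝ 1 (fderiv ℝ φ) := hφ.fderiv_right (by norm_num)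
  exact fderiv_pullback_symm (hω.differentiable one_ne_zero _) (hclosed (φ y))
    (hφ.differentiable two_ne_zero y) (hdφ.differentiable one_ne_zero y)
    (hφ.contDiffAt.isSymmSndFDerivAt (by simp [minSmoothness_of_isRCLikeNormedField]))
end

section
/- Let U ⊆ ℂ be open and convex and let u : ℂ → ℝ be twice continuously differentiable on U with u_xx + u_yy = 0 at every point of U (u is harmonic on U). Then there exists v : ℂ → ℝ such that f = u + i·v is complex differentiable at every point of U; that is, the closed dual form *θ = −u_y dx + u_x dy is a differential dv on U, and u, v are conjugated harmonic functions. -/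
/-- The partial derivative of `g : ℂ → ℝ` at `z` in the direction `1`:
`g_x(z) = d/dt g(z + t)|_{t=0}` with `t` real. -/
noncomputable def partialX (g : ℂ → ℝ) : ℂ → ℝ :=
  fun z => deriv (fun t : ℝ => g (z + (t : ℂ))) 0

/-- The partial derivative of `g : ℂ → ℝ` at `z` in the direction `i`:
`g_y(z) = d/dt g(z + t·i)|_{t=0}` with `t` real. -/
noncomputable def partialY (g : ℂ → ℝ) : ℂ → ℝ :=
  fun z => deriv (fun t : ℝ => g (z + (t : ℂ) * Complex.I)) 0

/-!
Harmonicity of `u` together with the symmetry of its second derivative are exactly the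
Cauchy–Riemann equations for `g = u_x - i u_y`, so `g` is holomorphic on `U`. On a convex set a
holomorphic function has a primitive `G`, and `Re G` has the same differential `du` as `u`.
Since `U` is connected, `u = Re G + a` for a constant `a`, and `v = Im G` is a harmonic conjugate.
-/

open Complex InnerProductSpace Laplacian Set Topology

lemma partialX_eq_fderiv {g : ℂ → ℝ} {z : ℂ} (hg : DifferentiableAt ℝ g z) :
    partialX g z = fderiv ℝ g z 1 := by
  rw [← hg.lineDeriv_eq_fderiv]
  simp [partialX, lineDeriv, real_smul]

lemma partialY_eq_fderiv {g : ℂ → ℝ} {z : ℂ} (hg : DifferentiableAt ℝ g z) :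
    partialY g z = fderiv ℝ g z I := by
  rw [← hg.lineDeriv_eq_fderiv]
  simp [partialY, lineDeriv, real_smul]

lemma laplacian_eq_partialX_partialX_add_partialY_partialY {u : ℂ → ℝ} {z : ℂ}
    (hu : ContDiffAt ℝ 2 u z) :
    Δ u z = partialX (partialX u) z + partialY (partialY u) z := by
  have hdu : ∀ᶠ w in 𝓝 z, DifferentiableAt ℝ u w :=
    (hu.eventually (by simp)).mono fun w hw ↦ hw.differentiableAt two_ne_zero
  have hd2u : DifferentiableAt ℝ (fderiv ℝ u) z :=
    (hu.fderiv_right (m := 1) le_rfl).differentiableAt one_ne_zero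
  have hX : partialX u =ᶠ[𝓝 z] fun w ↦ fderiv ℝ u w 1 :=
    hdu.mono fun w hw ↦ partialX_eq_fderiv hw
  have hY : partialY u =ᶠ[𝓝 z] fun w ↦ fderiv ℝ u w I :=
    hdu.mono fun w hw ↦ partialY_eq_fderiv hw
  rw [partialX_eq_fderiv ((hd2u.clm_apply (differentiableAt_const _)).congr_of_eventuallyEq hX),
    partialY_eq_fderiv ((hd2u.clm_apply (differentiableAt_const _)).congr_of_eventuallyEq hY),
    hX.fderiv_eq, hY.fderiv_eq, fderiv_clm_apply hd2u (differentiableAt_const _),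
    fderiv_clm_apply hd2u (differentiableAt_const _)]
  simp [laplacian_eq_iteratedFDeriv_complexPlane, iteratedFDeriv_two_apply]

lemma harmonicOnNhd_of_partialX_partialX_add_partialY_partialY {U : Set ℂ} (hU : IsOpen U)
    {u : ℂ → ℝ} (hu : ContDiffOn ℝ 2 u U)
    (hharm : ∀ z ∈ U, partialX (partialX u) z + partialY (partialY u) z = 0) :
    HarmonicOnNhd u U := fun z hz ↦
  ⟨hu.contDiffAt (hU.mem_nhds hz), Filter.mem_of_superset (hU.mem_nhds hz) fun w hw ↦ by
    simp [laplacian_eq_partialX_partialX_add_partialY_partialY (hu.contDiffAt (hU.mem_nhds hw)),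
      hharm w hw]⟩

lemma ContinuousLinearMap.re_apply_one_sub_I_mul_apply_I_mul (L : ℂ →L[ℝ] ℝ) (h : ℂ) :
    (((L 1 : ℂ) - I * L I) * h).re = L h := by
  have hh : h = h.re • (1 : ℂ) + h.im • I := by simp
  conv_rhs => rw [hh, map_add, map_smul, map_smul]
  simp [mul_comm]

theorem InnerProductSpace.HarmonicOnNhd.exists_differentiableOn_re_eq {U : Set ℂ}
    (hconv : Convex ℝ U) (hU : IsOpen U) {f : ℂ → ℝ} (hf : HarmonicOnNhd f U) :
    ∃ F : ℂ → ℂ, DifferentiableOn ℂ F U ∧ EqOn (fun z ↦ (F z).re) f U := by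
  set g : ℂ → ℂ := fun z ↦ fderiv ℝ f z 1 - I * fderiv ℝ f z I
  obtain ⟨G, hG⟩ := hconv.exists_forall_hasDerivWithinAt (f := g) fun z hz ↦
    (HarmonicAt.differentiableAt_complex_partial (hf z hz)).differentiableWithinAt
  have hG' : ∀ z ∈ U, HasDerivAt G (g z) z := fun z hz ↦ (hG z hz).hasDerivAt (hU.mem_nhds hz)
  have hreG : ∀ z ∈ U, HasFDerivAt (fun w ↦ (G w).re) (fderiv ℝ f z) z := fun z hz ↦ by
    refine (reCLM.hasFDerivAt.comp z ((hG' z hz).hasFDerivAt.restrictScalars ℝ)).congr_fderiv ?_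
    ext h
    simp only [ContinuousLinearMap.comp_apply, ContinuousLinearMap.coe_restrictScalars',
      ContinuousLinearMap.toSpanSingleton_apply, reCLM_apply, smul_eq_mul]
    rw [mul_comm]
    exact ContinuousLinearMap.re_apply_one_sub_I_mul_apply_I_mul _ h
  have hdf : DifferentiableOn ℝ f U := hf.contDiffOn.differentiableOn two_ne_zero
  obtain ⟨a, ha⟩ := hU.exists_eq_add_of_fderiv_eq hconv.isPreconnected hdf
    (fun z hz ↦ (hreG z hz).differentiableAt.differentiableWithinAt)
    (fun z hz ↦ ((hreG z hz).fderiv).symm)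
  refine ⟨fun z ↦ G z + a, fun z hz ↦ ?_, fun z hz ↦ by simp [ha hz]⟩
  exact ((hG' z hz).differentiableAt.add_const (a : ℂ)).differentiableWithinAt

/-- **Existence of a conjugated harmonic function.** If `u : ℂ → ℝ` is twice
continuously differentiable on an open convex set `U` and harmonic there
(`u_xx + u_yy = 0` on `U`), then there exists `v : ℂ → ℝ` such that `f = u + i·v`
is complex differentiable at every point of `U`; the closed dual form
`*θ = −u_y dx + u_x dy` is the differential `dv` on `U`. -/
theorem exists_harmonic_conjugate
    (U : Set ℂ) (hU : IsOpen U) (hconv : Convex ℝ U)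
    (u : ℂ → ℝ) (hu : ContDiffOn ℝ 2 u U)
    (hharm : ∀ z ∈ U, partialX (partialX u) z + partialY (partialY u) z = 0) :
    ∃ v : ℂ → ℝ, ∀ z ∈ U,
      DifferentiableAt ℂ (fun w => ((u w : ℂ) + (v w : ℂ) * Complex.I)) z := by
  obtain ⟨F, hF, hre⟩ := (harmonicOnNhd_of_partialX_partialX_add_partialY_partialY hU hu
    hharm).exists_differentiableOn_re_eq hconv hU
  refine ⟨fun z ↦ (F z).im, fun z hz ↦ ?_⟩
  have hFeq : F =ᶠ[𝓝 z] fun w ↦ (u w : ℂ) + ((F w).im : ℂ) * I :=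
    Filter.mem_of_superset (hU.mem_nhds hz) fun w hw ↦ by simp [← hre hw, re_add_im]
  exact (hF.differentiableAt (hU.mem_nhds hz)).congr_of_eventuallyEq hFeq.symm
end

section
/- Let L : ℝⁿ × ℝⁿ → ℝ be twice continuously differentiable with arguments (q, q̇) (an autonomous Lagrange function), and let q : ℝ → ℝⁿ be a twice continuously differentiable curve satisfying the Euler–Lagrange equations d/dt (∂L/∂q̇ⱼ(q(t), q'(t))) = ∂L/∂qⱼ(q(t), q'(t)) for all j and all t. Then the Hamilton function along the trajectory, H(t) = Σⱼ q'ⱼ(t)·∂L/∂q̇ⱼ(q(t), q'(t)) − L(q(t), q'(t)), is constant in t. -/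
/-!
Along any C² curve, the chain rule gives `dH/dt = Σⱼ q̇ⱼ (ṗⱼ - ∂L/∂qⱼ)`: the terms `q̈ⱼ pⱼ` from
differentiating `Σⱼ q̇ⱼ pⱼ` cancel against the `q̈`-part of `dL/dt`. The Euler–Lagrange equations make
each bracket vanish, so `H` has zero derivative everywhere and is constant.
-/

theorem map_prod_eq_sum_mul {ι R F : Type*} [Fintype ι] [DecidableEq ι] [CommSemiring R]
    [FunLike F ((ι → R) × (ι → R)) R] [LinearMapClass F R ((ι → R) × (ι → R)) R]
    (φ : F) (v w : ι → R) :
    φ (v, w) = ∑ j, v j * φ (Pi.single j 1, 0) + ∑ j, w j * φ (0, Pi.single j 1) := by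
  have hvw : (v, w) = ∑ j, v j • ((Pi.single j 1 : ι → R), (0 : ι → R))
      + ∑ j, w j • ((0 : ι → R), (Pi.single j 1 : ι → R)) := by
    ext <;> simp [Prod.fst_sum, Prod.snd_sum, ← pi_eq_sum_univ']
  rw [hvw, map_add, map_sum, map_sum]
  simp only [map_smul, smul_eq_mul]

section Lagrangian

variable {ι : Type*} [Fintype ι] [DecidableEq ι]

/-- `pⱼ(s) = ∂L/∂q̇ⱼ (q s, q̇ s)`: the partial derivative in `q̇ⱼ` is `DL` applied to `(0, eⱼ)`. -/
noncomputable def conjugateMomentum (L : (ι → ℝ) × (ι → ℝ) → ℝ) (q : ℝ → ι → ℝ) (j : ι)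
    (s : ℝ) : ℝ :=
  fderiv ℝ L (q s, deriv q s) (0, Pi.single j 1)

noncomputable def hamiltonAlong (L : (ι → ℝ) × (ι → ℝ) → ℝ) (q : ℝ → ι → ℝ) (s : ℝ) : ℝ :=
  (∑ j, deriv q s j * conjugateMomentum L q j s) - L (q s, deriv q s)

theorem hasDerivAt_hamiltonAlong {L : (ι → ℝ) × (ι → ℝ) → ℝ} {q : ℝ → ι → ℝ} {t : ℝ}
    {p' : ι → ℝ} (hL : DifferentiableAt ℝ L (q t, deriv q t)) (hq : DifferentiableAt ℝ q t)
    (hq' : DifferentiableAt ℝ (deriv q) t)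
    (hp : ∀ j, HasDerivAt (conjugateMomentum L q j) (p' j) t) :
    HasDerivAt (hamiltonAlong L q)
      (∑ j, deriv q t j * (p' j - fderiv ℝ L (q t, deriv q t) (Pi.single j 1, 0))) t := by
  set DL := fderiv ℝ L (q t, deriv q t)
  have hvel : ∀ j, HasDerivAt (fun s => deriv q s j) (deriv (deriv q) t j) t := fun j =>
    hasDerivAt_pi.mp hq'.hasDerivAt j
  have hLag : HasDerivAt (fun s => L (q s, deriv q s)) (DL (deriv q t, deriv (deriv q) t)) t :=
    hL.hasFDerivAt.comp_hasDerivAt t (hq.hasDerivAt.prodMk hq'.hasDerivAt)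
  refine ((HasDerivAt.fun_sum fun j _ => (hvel j).mul (hp j)).sub hLag).congr_deriv ?_
  rw [map_prod_eq_sum_mul DL]
  simp only [conjugateMomentum, mul_sub, Finset.sum_sub_distrib, Finset.sum_add_distrib, DL]
  ring

end Lagrangian

/-- **Conservation of the Hamilton function.** For an autonomous C² Lagrange function
`L(q, q̇)` and a C² trajectory `q` satisfying the Euler–Lagrange equations
`d/dt (∂L/∂q̇ⱼ) = ∂L/∂qⱼ`, the Hamilton function along the trajectory,
`H(t) = Σⱼ q̇ⱼ(t)·∂L/∂q̇ⱼ(q(t), q'(t)) − L(q(t), q'(t))`, is constant in `t`. -/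
theorem hamilton_function_constant_along_euler_lagrange
    {n : ℕ} (L : (Fin n → ℝ) × (Fin n → ℝ) → ℝ) (hL : ContDiff ℝ 2 L)
    (q : ℝ → (Fin n → ℝ)) (hq : ContDiff ℝ 2 q)
    (hEL : ∀ (j : Fin n) (t : ℝ),
      HasDerivAt (fun s => fderiv ℝ L (q s, deriv q s) (0, Pi.single j 1))
        (fderiv ℝ L (q t, deriv q t) (Pi.single j 1, 0)) t) :
    ∀ s t : ℝ,
      (∑ j, deriv q s j * fderiv ℝ L (q s, deriv q s) (0, Pi.single j 1))
          - L (q s, deriv q s) =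
        (∑ j, deriv q t j * fderiv ℝ L (q t, deriv q t) (0, Pi.single j 1))
          - L (q t, deriv q t) := by
  have hH : ∀ t, HasDerivAt (hamiltonAlong L q) 0 t := fun t => by
    simpa using hasDerivAt_hamiltonAlong (hL.differentiable (by norm_num) _)
      (hq.differentiable (by norm_num) t) (hq.differentiable_deriv_two t) (hEL · t)
  exact is_const_of_deriv_eq_zero (fun t => (hH t).differentiableAt) (fun t => (hH t).deriv)
end
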